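/- arXiv:1702.00902 — 3 statements merged into one kernel-verified Lean document; each statement's English description precedes it below -/
import Mathlib

section
/- Let μ > 0, ν ≥ 0. Let u : [0,∞) × ℝ³ → ℝ³, F : [0,∞) × ℝ³ → Matrix (Fin 3) (Fin 3) ℝ and p : [0,∞) × ℝ³ → ℝ be smooth, with u(t,·), F(t,·), p(t,·) supported in a fixed compact set K ⊂ ℝ³ for all t in any finite time interval. Suppose that pointwise: ∂_t u − μΔu + (u·∇)u + ∇p = ∑_k (F_{·k}·∇)F_{·k}; ∂_t F_{·k} + ν F_{·k} + (u·∇)F_{·k} = (F_{·k}·∇)u for each k; ∑_i ∂_i u_i = 0; and ∑_j ∂_j F_{jk} = 0 for each k. Then for all t > 0, (1/2) d/dt (‖u(t,·)‖²_{L²} + ‖F(t,·)‖²_{L²}) + ν ‖F(t,·)‖²_{L²} + μ ‖∇u(t,·)‖²_{L²} = 0, where ‖F‖²_{L²} = ∑_{i,k} ‖F_{ik}‖²_{L²} and ‖∇u‖²_{L²} = ∑_{i,j} ‖∂_j u_i‖²_{L²}. -/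
open MeasureTheory Set

noncomputable def pd (j : Fin 3) (f : (Fin 3 → ℝ) → ℝ) : (Fin 3 → ℝ) → ℝ :=
  fun x => fderiv ℝ f x (Pi.single j 1)

lemma pd_contDiff {f : (Fin 3 → ℝ) → ℝ} (hf : ContDiff ℝ (⊤ : ℕ∞) f) (j : Fin 3) :
    ContDiff ℝ (⊤ : ℕ∞) (pd j f) :=
  (hf.fderiv_right (by simp)).clm_apply contDiff_const

lemma pd_cont {f : (Fin 3 → ℝ) → ℝ} (hf : ContDiff ℝ (⊤ : ℕ∞) f) (j : Fin 3) :
    Continuous (pd j f) := (pd_contDiff hf j).continuous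

lemma pd_hcs {f : (Fin 3 → ℝ) → ℝ} (hs : HasCompactSupport f) (j : Fin 3) :
    HasCompactSupport (pd j f) := by
  have h := (hs.fderiv (𝕜 := ℝ)).comp_left (g := fun L : (Fin 3 → ℝ) →L[ℝ] ℝ => L (Pi.single j 1))
    (by simp)
  exact h

lemma pd_mul {f g : (Fin 3 → ℝ) → ℝ} (hf : ContDiff ℝ (⊤ : ℕ∞) f) (hg : ContDiff ℝ (⊤ : ℕ∞) g) (j : Fin 3)
    (x : Fin 3 → ℝ) :
    pd j (fun y => f y * g y) x = f x * pd j g x + pd j f x * g x := by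
  simp only [pd]
  rw [fderiv_fun_mul (hf.differentiable (by simp) x) (hg.differentiable (by simp) x)]
  simp [mul_comm]

lemma cts_integrable {f g : (Fin 3 → ℝ) → ℝ} (h1 : Continuous f) (hc : HasCompactSupport f)
    (h2 : Continuous g) : Integrable (fun x => f x * g x) :=
  (h1.mul h2).integrable_of_hasCompactSupport hc.mul_right

theorem my_ibp_zero (f : (Fin 3 → ℝ) → ℝ) (hf : ContDiff ℝ (⊤ : ℕ∞) f) (hs : HasCompactSupport f)
    (j : Fin 3) : ∫ x : Fin 3 → ℝ, fderiv ℝ f x (Pi.single j 1) = 0 := by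
  obtain ⟨R₀, hR₀⟩ := hs.isBounded.exists_norm_le
  set R := |R₀| with hRdef
  have hR : ∀ x ∈ tsupport f, ‖x‖ ≤ R := fun x hx => (hR₀ x hx).trans (le_abs_self _)
  set a : Fin 3 → ℝ := fun _ => -(R + 1) with ha
  set b : Fin 3 → ℝ := fun _ => (R + 1) with hb
  have hRR : (0:ℝ) ≤ R := abs_nonneg _
  have hle : a ≤ b := fun i => by simp only [ha, hb]; linarith
  have hout : ∀ x : Fin 3 → ℝ, R < ‖x‖ → f x = 0 := by
    intro x hx
    have : x ∉ tsupport f := fun h => absurd (hR x h) (not_le.2 hx)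
    exact image_eq_zero_of_notMem_tsupport this
  have hcd : Continuous fun x : Fin 3 → ℝ => fderiv ℝ f x (Pi.single j 1) :=
    (hf.continuous_fderiv (by simp)).clm_apply continuous_const
  have houtd : ∀ x : Fin 3 → ℝ, R < ‖x‖ → fderiv ℝ f x = 0 := by
    intro x hx
    have : x ∉ tsupport f := fun h => absurd (hR x h) (not_le.2 hx)
    exact image_eq_zero_of_notMem_tsupport
      (fun h => this (tsupport_fderiv_subset ℝ h))
  have hsum : ∀ x : Fin 3 → ℝ,
      (∑ i, (if i = j then fderiv ℝ f x else 0) (Pi.single i 1))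
        = fderiv ℝ f x (Pi.single j 1) := by
    intro x
    rw [Finset.sum_eq_single j] <;> simp +contextual
  have key := integral_divergence_of_hasFDerivAt_off_countable' (n := 2) a b hle
      (fun i x => if i = j then f x else 0)
      (fun i x => if i = j then fderiv ℝ f x else 0) ∅ countable_empty
      (fun i => by
        by_cases h : i = j
        · simpa [h] using hf.continuous.continuousOn
        · simpa [h] using continuousOn_const)
      (fun x _ i => by
        by_cases h : i = j
        · simpa [h] using (hf.differentiable (by simp) x).hasFDerivAt
        · simpa [h] using hasFDerivAt_const (0:ℝ) x)
      (by
        apply ContinuousOn.integrableOn_compact isCompact_Icc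
        exact ((continuous_finset_sum _ fun i _ => by
          by_cases h : i = j
          · simpa [h] using hcd
          · simp [h]; exact continuous_const)).continuousOn)
  simp only [hsum] at key
  have faces : ∀ (i : Fin 3) (c : ℝ) (hc : R < |c|) (x : Fin 2 → ℝ),
      f (Fin.insertNth (α := fun _ => ℝ) i c x) = 0 := by
    intro i c hc x
    apply hout
    calc R < |c| := hc
    _ = ‖(Fin.insertNth (α := fun _ => ℝ) i c x) i‖ := by rw [Fin.insertNth_apply_same]; rfl
    _ ≤ ‖Fin.insertNth (α := fun _ => ℝ) i c x‖ := norm_le_pi_norm _ i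
  have hRb : R < |R + 1| := by rw [abs_of_nonneg (by linarith)]; linarith
  have hRa : R < |-(R + 1)| := by rw [abs_neg, abs_of_nonneg (by linarith)]; linarith
  have rhs0 : ∀ i : Fin 3,
      ((∫ x in Icc (a ∘ Fin.succAbove i) (b ∘ Fin.succAbove i),
          (fun i x => if i = j then f x else 0) i (Fin.insertNth i (b i) x)) -
        ∫ x in Icc (a ∘ Fin.succAbove i) (b ∘ Fin.succAbove i),
          (fun i x => if i = j then f x else 0) i (Fin.insertNth i (a i) x)) = 0 := by
    intro i
    by_cases h : i = j
    · subst h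
      simp only [if_pos rfl, faces i (b i) hRb, faces i (a i) hRa, integral_zero, sub_zero]
      simp
    · simp [h]
  rw [Finset.sum_congr rfl (fun i _ => rhs0 i), Finset.sum_const_zero] at key
  rw [← setIntegral_eq_integral_of_forall_compl_eq_zero (s := Icc a b), key]
  intro x hx
  have hex : ∃ i, x i < a i ∨ b i < x i := by
    by_contra h
    push_neg at h
    exact hx ⟨fun i => (h i).1, fun i => (h i).2⟩
  obtain ⟨i, hi⟩ := hex
  have habs : R < |x i| := by
    rcases hi with hi | hi
    · exact lt_abs.2 (Or.inr (by simp only [ha] at hi; linarith))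
    · exact lt_abs.2 (Or.inl (by simp only [hb] at hi; linarith))
  have : R < ‖x‖ := lt_of_lt_of_le habs (norm_le_pi_norm x i)
  rw [houtd x this]; rfl


lemma ibp_mul {f g : (Fin 3 → ℝ) → ℝ} (hf : ContDiff ℝ (⊤ : ℕ∞) f) (hg : ContDiff ℝ (⊤ : ℕ∞) g)
    (hsf : HasCompactSupport f) (j : Fin 3) :
    ∫ x, f x * pd j g x = - ∫ x, pd j f x * g x := by
  have h0 : ∫ x, pd j (fun y => f y * g y) x = 0 := my_ibp_zero _ (hf.mul hg) hsf.mul_right j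
  have h1 : Integrable (fun x => f x * pd j g x) :=
    cts_integrable hf.continuous hsf (pd_cont hg j)
  have h2 : Integrable (fun x => pd j f x * g x) :=
    cts_integrable (pd_cont hf j) (pd_hcs hsf j) hg.continuous
  have h3 : ∫ x, (f x * pd j g x + pd j f x * g x) = 0 := by
    rw [← h0]; exact integral_congr_ae (Filter.Eventually.of_forall fun x =>
      (pd_mul hf hg j x).symm)
  rw [integral_add h1 h2] at h3
  linarith

/-- transport term with a divergence free vector field integrates to zero -/
lemma div_free_transport {v : Fin 3 → (Fin 3 → ℝ) → ℝ} {φ : (Fin 3 → ℝ) → ℝ}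
    (hv : ∀ j, ContDiff ℝ (⊤ : ℕ∞) (v j)) (hvs : ∀ j, HasCompactSupport (v j))
    (hdiv : ∀ x, ∑ j, pd j (v j) x = 0) (hφ : ContDiff ℝ (⊤ : ℕ∞) φ) :
    ∫ x, ∑ j, v j x * pd j φ x = 0 := by
  rw [integral_finset_sum _ (fun j _ => cts_integrable (hv j).continuous (hvs j) (pd_cont hφ j))]
  have : ∀ j : Fin 3, ∫ x, v j x * pd j φ x = - ∫ x, pd j (v j) x * φ x := fun j =>
    ibp_mul (hv j) hφ (hvs j) j
  rw [Finset.sum_congr rfl fun j _ => this j, Finset.sum_neg_distrib, neg_eq_zero,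
    ← integral_finset_sum _ (fun j _ =>
      cts_integrable (pd_cont (hv j) j) (pd_hcs (hvs j) j) hφ.continuous)]
  have : ∀ x : Fin 3 → ℝ, ∑ j, pd j (v j) x * φ x = 0 := by
    intro x
    rw [← Finset.sum_mul, hdiv x, zero_mul]
  simp [integral_congr_ae (Filter.Eventually.of_forall this)]

/-- cross lemma -/
lemma div_free_cross {v : Fin 3 → (Fin 3 → ℝ) → ℝ} {f g : (Fin 3 → ℝ) → ℝ}
    (hv : ∀ j, ContDiff ℝ (⊤ : ℕ∞) (v j)) (hvs : ∀ j, HasCompactSupport (v j))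
    (hdiv : ∀ x, ∑ j, pd j (v j) x = 0) (hf : ContDiff ℝ (⊤ : ℕ∞) f) (hg : ContDiff ℝ (⊤ : ℕ∞) g) :
    ∫ x, ∑ j, v j x * (f x * pd j g x + pd j f x * g x) = 0 := by
  have h := div_free_transport hv hvs hdiv (hf.mul hg)
  rw [← h]
  exact integral_congr_ae (Filter.Eventually.of_forall fun x => by
    exact Finset.sum_congr rfl fun j _ => by rw [pd_mul hf hg j x])

lemma hasDerivAt_int {ι : Type} [Fintype ι] (t : ℝ) (ht : 0 < t)
    (g : ι → ℝ × (Fin 3 → ℝ) → ℝ)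
    (hg : ∀ i, ContDiffOn ℝ (⊤ : ℕ∞) (g i) (Set.Ici 0 ×ˢ Set.univ))
    {K : Set (Fin 3 → ℝ)} (hK : IsCompact K)
    (hsupp : ∀ i, ∀ s ∈ Set.Icc (0:ℝ) (2*t), ∀ x ∉ K, g i (s, x) = 0) :
    HasDerivAt (fun s => ∫ x : Fin 3 → ℝ, ∑ i, (g i (s, x))^2)
      (∫ x : Fin 3 → ℝ, ∑ i, 2 * g i (t, x) * fderiv ℝ (g i) (t, x) (1, 0)) t := by
  have hO : IsOpen (Set.Ioi (0:ℝ) ×ˢ (Set.univ : Set (Fin 3 → ℝ))) :=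
    isOpen_Ioi.prod isOpen_univ
  have hgO : ∀ i, ContDiffOn ℝ (⊤ : ℕ∞) (g i) (Set.Ioi 0 ×ˢ Set.univ) := fun i =>
    (hg i).mono (Set.prod_mono Set.Ioi_subset_Ici_self le_rfl)
  -- continuity of g i on the open set
  have hgc : ∀ i, ContinuousOn (g i) (Set.Ioi 0 ×ˢ Set.univ) := fun i => (hgO i).continuousOn
  -- continuity of the full fderiv on the open set
  have hgd : ∀ i, ContinuousOn (fderiv ℝ (g i)) (Set.Ioi 0 ×ˢ Set.univ) := fun i =>
    (hgO i).continuousOn_fderiv_of_isOpen hO (by simp)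
  -- differentiability at interior points
  have hdiff : ∀ i, ∀ q : ℝ × (Fin 3 → ℝ), 0 < q.1 → DifferentiableAt ℝ (g i) q := by
    intro i q hq
    have : Set.Ioi (0:ℝ) ×ˢ (Set.univ : Set (Fin 3 → ℝ)) ∈ nhds q :=
      hO.mem_nhds ⟨hq, trivial⟩
    exact (((hgO i) q ⟨hq, trivial⟩).contDiffAt
      (hO.mem_nhds ⟨hq, trivial⟩)).differentiableAt (by simp)
  -- time derivative
  have hder : ∀ i (s : ℝ) (x : Fin 3 → ℝ), 0 < s →
      HasDerivAt (fun s' => g i (s', x)) (fderiv ℝ (g i) (s, x) (1, 0)) s := by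
    intro i s x hs
    exact ((hdiff i (s, x) hs).hasFDerivAt).comp_hasDerivAt s
      ((hasDerivAt_id s).prodMk (hasDerivAt_const s x))
  have hball : Metric.ball t (t/2) ⊆ Set.Ioo (t/2) (2*t) := by
    intro s hs
    rw [Metric.mem_ball, Real.dist_eq, abs_lt] at hs
    constructor <;> linarith [hs.1, hs.2]
  -- vanishing outside K
  have hzero : ∀ i (s : ℝ), s ∈ Set.Ioo (t/2) (2*t) → ∀ x ∉ K,
      g i (s, x) = 0 ∧ fderiv ℝ (g i) (s, x) = 0 := by
    intro i s hs x hx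
    have hV : ∃ V : Set (Fin 3 → ℝ), IsOpen V ∧ x ∈ V ∧ Disjoint V K := by
      have : Kᶜ ∈ nhds x := hK.isClosed.isOpen_compl.mem_nhds hx
      exact ⟨Kᶜ, hK.isClosed.isOpen_compl, hx, disjoint_compl_left_iff.2 (le_refl _)⟩
    obtain ⟨V, hVo, hxV, hVK⟩ := hV
    have hev : g i =ᶠ[nhds (s, x)] (fun _ => 0) := by
      have hmem : (Set.Ioo (0:ℝ) (2*t)) ×ˢ V ∈ nhds (s, x) :=
        (isOpen_Ioo.prod hVo).mem_nhds ⟨⟨by linarith [hs.1, ht], hs.2⟩, hxV⟩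
      refine Filter.eventuallyEq_of_mem hmem ?_
      rintro ⟨s', x'⟩ ⟨hs', hx'⟩
      exact hsupp i s' ⟨(hs'.1 : (0:ℝ) < s').le, hs'.2.le⟩ x'
        (fun h => (hVK.ne_of_mem hx' h) rfl)
    constructor
    · exact hev.eq_of_nhds
    · rw [hev.fderiv_eq]; exact fderiv_const_apply 0
  -- start main argument
  set Fp : ℝ → (Fin 3 → ℝ) → ℝ := fun s x => ∑ i, (g i (s, x))^2 with hFp
  set Fp' : ℝ → (Fin 3 → ℝ) → ℝ :=
    fun s x => ∑ i, 2 * g i (s, x) * fderiv ℝ (g i) (s, x) (1, 0) with hFp'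
  have hcont_x : ∀ s : ℝ, 0 < s → ∀ i, Continuous (fun x : Fin 3 → ℝ => g i (s, x)) := by
    intro s hs i
    exact (hgc i).comp_continuous (continuous_const.prodMk continuous_id)
      (fun x => ⟨hs, trivial⟩)
  have hcont_dx : ∀ s : ℝ, 0 < s → ∀ i,
      Continuous (fun x : Fin 3 → ℝ => fderiv ℝ (g i) (s, x) (1, 0)) := by
    intro s hs i
    have h1 : Continuous (fun x : Fin 3 → ℝ => fderiv ℝ (g i) (s, x)) :=
      (hgd i).comp_continuous (continuous_const.prodMk continuous_id)
        (fun x => ⟨hs, trivial⟩)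
    exact h1.clm_apply continuous_const
  -- the compact set and the bound
  set M : Set (ℝ × (Fin 3 → ℝ)) := Set.Icc (t/2) (2*t) ×ˢ K with hM
  have hMc : IsCompact M := isCompact_Icc.prod hK
  have hMO : M ⊆ Set.Ioi 0 ×ˢ Set.univ := by
    rintro ⟨s, x⟩ ⟨hs, _⟩
    exact ⟨lt_of_lt_of_le (by linarith : (0:ℝ) < t/2) hs.1, trivial⟩
  have hφc : ContinuousOn (fun q : ℝ × (Fin 3 → ℝ) =>
      ∑ i, 2 * g i q * fderiv ℝ (g i) q (1, 0)) (Set.Ioi 0 ×ˢ Set.univ) := by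
    apply continuousOn_finset_sum _ ?_
    intro i _
    exact (continuousOn_const.mul (hgc i)).mul ((hgd i).clm_apply continuousOn_const)
  obtain ⟨C, hC⟩ := hMc.exists_bound_of_continuousOn (hφc.mono hMO)
  set bound : (Fin 3 → ℝ) → ℝ := K.indicator (fun _ => C) with hbound
  have hmain := hasDerivAt_integral_of_dominated_loc_of_deriv_le (μ := volume)
    (F := Fp) (F' := Fp') (x₀ := t) (bound := bound) (Metric.ball_mem_nhds t (half_pos ht))
    (by
      filter_upwards [isOpen_Ioi.mem_nhds ht] with s hs
      exact (continuous_finset_sum _ fun i _ => (hcont_x s hs i).pow 2).aestronglyMeasurable)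
    (by
      apply Continuous.integrable_of_hasCompactSupport
        (continuous_finset_sum _ fun i _ => (hcont_x t ht i).pow 2)
      apply HasCompactSupport.intro hK
      intro x hx
      have : ∀ i, g i (t, x) = 0 := fun i =>
        hsupp i t ⟨ht.le, by linarith⟩ x hx
      simp [hFp, this])
    (by
      exact (continuous_finset_sum _ fun i _ =>
        (continuous_const.mul (hcont_x t ht i)).mul (hcont_dx t ht i)).aestronglyMeasurable)
    (by
      apply Filter.Eventually.of_forall
      intro x s hs
      by_cases hx : x ∈ K
      · have hsM : (s, x) ∈ M := ⟨⟨(hball hs).1.le, (hball hs).2.le⟩, hx⟩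
        have := hC (s, x) hsM
        rwa [hbound, Set.indicator_of_mem hx]
      · have h0 : Fp' s x = 0 := by
          rw [hFp']
          apply Finset.sum_eq_zero
          intro i _
          rw [(hzero i s (hball hs) x hx).1]
          ring
        rw [h0, hbound, Set.indicator_of_notMem hx]
        simp)
    (by
      rw [hbound, integrable_indicator_iff hK.measurableSet]
      exact integrableOn_const hK.measure_lt_top.ne)
    (by
      apply Filter.Eventually.of_forall
      intro x s hs
      have hs0 : 0 < s := (hball hs).1.trans_le' (by linarith)
      apply HasDerivAt.fun_sum
      intro i _
      have := (hder i s x hs0).fun_pow 2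
      simpa using this)
  exact hmain.2

lemma energy_core (μ ν : ℝ)
    (U : Fin 3 → (Fin 3 → ℝ) → ℝ) (G : Fin 3 → Fin 3 → (Fin 3 → ℝ) → ℝ)
    (P : (Fin 3 → ℝ) → ℝ)
    (ut : Fin 3 → (Fin 3 → ℝ) → ℝ) (Gt : Fin 3 → Fin 3 → (Fin 3 → ℝ) → ℝ)
    (hU : ∀ i, ContDiff ℝ (⊤ : ℕ∞) (U i)) (hUs : ∀ i, HasCompactSupport (U i))
    (hG : ∀ i k, ContDiff ℝ (⊤ : ℕ∞) (G i k)) (hGs : ∀ i k, HasCompactSupport (G i k))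
    (hP : ContDiff ℝ (⊤ : ℕ∞) P)
    (heq1 : ∀ x i, ut i x = μ * ∑ j, pd j (pd j (U i)) x - ∑ j, U j x * pd j (U i) x
        - pd i P x + ∑ k, ∑ j, G j k x * pd j (G i k) x)
    (heq2 : ∀ x i k, Gt i k x = -(ν * G i k x) - ∑ j, U j x * pd j (G i k) x
        + ∑ j, G j k x * pd j (U i) x)
    (hdivu : ∀ x, ∑ i, pd i (U i) x = 0)
    (hdivF : ∀ k x, ∑ j, pd j (G j k) x = 0) :
    (∫ x, ∑ i, 2 * U i x * ut i x) + (∫ x, ∑ i, ∑ k, 2 * G i k x * Gt i k x)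
      = 2 * (-(ν * ∫ x, ∑ i, ∑ k, (G i k x)^2)
        - μ * ∫ x, ∑ i, ∑ j, (pd j (U i) x)^2) := by
  -- atomic integrability facts
  have cU : ∀ i, Continuous (U i) := fun i => (hU i).continuous
  have cG : ∀ i k, Continuous (G i k) := fun i k => (hG i k).continuous
  have cpdU : ∀ i j, Continuous (pd j (U i)) := fun i j => pd_cont (hU i) j
  have cpdG : ∀ i k j, Continuous (pd j (G i k)) := fun i k j => pd_cont (hG i k) j
  -- the cross integrals
  set c : Fin 3 → Fin 3 → ℝ :=
    fun i k => ∫ x, ∑ j, G j k x * (U i x * pd j (G i k) x) with hc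
  set d : Fin 3 → Fin 3 → ℝ :=
    fun i k => ∫ x, ∑ j, G j k x * (pd j (U i) x * G i k x) with hd
  -- cancellation of cross terms
  have hcd : ∀ i k, d i k = - c i k := by
    intro i k
    have h := div_free_cross (v := fun j => G j k) (f := U i) (g := G i k)
      (fun j => hG j k) (fun j => hGs j k) (hdivF k) (hU i) (hG i k)
    have hsplit : ∫ x, ∑ j, G j k x * (U i x * pd j (G i k) x + pd j (U i) x * G i k x)
        = c i k + d i k := by
      have hpt : ∀ x : Fin 3 → ℝ,
          ∑ j, G j k x * (U i x * pd j (G i k) x + pd j (U i) x * G i k x)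
          = (∑ j, G j k x * (U i x * pd j (G i k) x))
            + ∑ j, G j k x * (pd j (U i) x * G i k x) := by
        intro x
        rw [← Finset.sum_add_distrib]
        exact Finset.sum_congr rfl fun j _ => by ring
      rw [integral_congr_ae (Filter.Eventually.of_forall hpt)]
      rw [integral_add]
      · exact integrable_finset_sum _ fun j _ =>
          cts_integrable (cG j k) (hGs j k) ((cU i).mul (cpdG i k j))
      · exact integrable_finset_sum _ fun j _ =>
          cts_integrable (cG j k) (hGs j k) ((cpdU i j).mul (cG i k))
    rw [hsplit] at h
    linarith
  -- Laplacian term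
  have hlap : ∀ i j, ∫ x, U i x * pd j (pd j (U i)) x = - ∫ x, (pd j (U i) x)^2 := by
    intro i j
    rw [ibp_mul (hU i) (pd_contDiff (hU i) j) (hUs i) j]
    congr 1
    exact integral_congr_ae (Filter.Eventually.of_forall fun x => (sq (pd j (U i) x)).symm)
  -- pointwise identity for the u-part
  have point1 : ∀ (x : Fin 3 → ℝ) (i : Fin 3), 2 * U i x * ut i x =
      2*μ*(∑ j, U i x * pd j (pd j (U i)) x)
      - (∑ j, U j x * (U i x * pd j (U i) x + pd j (U i) x * U i x))
      - 2*(U i x * pd i P x)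
      + 2*(∑ k, ∑ j, G j k x * (U i x * pd j (G i k) x)) := by
    intro x i
    rw [heq1 x i]
    have b1 : 2*U i x*(μ*∑ j, pd j (pd j (U i)) x)
        = 2*μ*(∑ j, U i x * pd j (pd j (U i)) x) := by
      simp only [Finset.mul_sum]
      exact Finset.sum_congr rfl fun j _ => by ring
    have b2 : 2*U i x*(∑ j, U j x * pd j (U i) x)
        = ∑ j, U j x * (U i x * pd j (U i) x + pd j (U i) x * U i x) := by
      simp only [Finset.mul_sum]
      exact Finset.sum_congr rfl fun j _ => by ring
    have b4 : 2*U i x*(∑ k, ∑ j, G j k x * pd j (G i k) x)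
        = 2*(∑ k, ∑ j, G j k x * (U i x * pd j (G i k) x)) := by
      simp only [Finset.mul_sum]
      exact Finset.sum_congr rfl fun k _ => Finset.sum_congr rfl fun j _ => by ring
    calc 2 * U i x * (μ * ∑ j, pd j (pd j (U i)) x - ∑ j, U j x * pd j (U i) x
          - pd i P x + ∑ k, ∑ j, G j k x * pd j (G i k) x)
        = 2*U i x*(μ*∑ j, pd j (pd j (U i)) x) - 2*U i x*(∑ j, U j x * pd j (U i) x)
          - 2*(U i x * pd i P x) + 2*U i x*(∑ k, ∑ j, G j k x * pd j (G i k) x) := by ring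
      _ = _ := by rw [b1, b2, b4]
  -- pointwise identity for the F-part
  have point2 : ∀ (x : Fin 3 → ℝ) (i k : Fin 3), 2 * G i k x * Gt i k x =
      -(2*ν*(G i k x)^2)
      - (∑ j, U j x * (G i k x * pd j (G i k) x + pd j (G i k) x * G i k x))
      + 2*(∑ j, G j k x * (pd j (U i) x * G i k x)) := by
    intro x i k
    rw [heq2 x i k]
    have b2 : 2*G i k x*(∑ j, U j x * pd j (G i k) x)
        = ∑ j, U j x * (G i k x * pd j (G i k) x + pd j (G i k) x * G i k x) := by
      simp only [Finset.mul_sum]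
      exact Finset.sum_congr rfl fun j _ => by ring
    have b3 : 2*G i k x*(∑ j, G j k x * pd j (U i) x)
        = 2*(∑ j, G j k x * (pd j (U i) x * G i k x)) := by
      simp only [Finset.mul_sum]
      exact Finset.sum_congr rfl fun j _ => by ring
    calc 2 * G i k x * (-(ν * G i k x) - ∑ j, U j x * pd j (G i k) x
          + ∑ j, G j k x * pd j (U i) x)
        = -(2*ν*(G i k x)^2) - 2*G i k x*(∑ j, U j x * pd j (G i k) x)
          + 2*G i k x*(∑ j, G j k x * pd j (U i) x) := by ring
      _ = _ := by rw [b2, b3]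
  -- integrability helpers
  have intSqU : ∀ i j, Integrable (fun x => (pd j (U i) x)^2) := by
    intro i j
    have := cts_integrable (cpdU i j) (pd_hcs (hUs i) j) (cpdU i j)
    simpa only [sq] using this
  have intSqG : ∀ i k, Integrable (fun x => (G i k x)^2) := by
    intro i k
    have := cts_integrable (cG i k) (hGs i k) (cG i k)
    simpa only [sq] using this
  have iA : ∀ i, Integrable (fun x => 2*μ*(∑ j, U i x * pd j (pd j (U i)) x)) := fun i =>
    (integrable_finset_sum _ fun j _ => cts_integrable (cU i) (hUs i)
      (pd_cont (pd_contDiff (hU i) j) j)).const_mul _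
  have iB : ∀ i, Integrable
      (fun x => ∑ j, U j x * (U i x * pd j (U i) x + pd j (U i) x * U i x)) := fun i =>
    integrable_finset_sum _ fun j _ => cts_integrable (cU j) (hUs j)
      (((cU i).mul (cpdU i j)).add ((cpdU i j).mul (cU i)))
  have iC : ∀ i, Integrable (fun x => 2*(U i x * pd i P x)) := fun i =>
    (cts_integrable (cU i) (hUs i) (pd_cont hP i)).const_mul _
  have iD : ∀ i, Integrable
      (fun x => 2*(∑ k, ∑ j, G j k x * (U i x * pd j (G i k) x))) := fun i =>
    (integrable_finset_sum _ fun k _ => integrable_finset_sum _ fun j _ =>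
      cts_integrable (cG j k) (hGs j k) ((cU i).mul (cpdG i k j))).const_mul _
  have hsqU : ∫ x, ∑ i, ∑ j, (pd j (U i) x)^2 = ∑ i, ∑ j, ∫ x, (pd j (U i) x)^2 := by
    rw [integral_finset_sum _ (fun i _ => integrable_finset_sum _ fun j _ => intSqU i j)]
    exact Finset.sum_congr rfl fun i _ => integral_finset_sum _ fun j _ => intSqU i j
  have hsqG : ∫ x, ∑ i, ∑ k, (G i k x)^2 = ∑ i, ∑ k, ∫ x, (G i k x)^2 := by
    rw [integral_finset_sum _ (fun i _ => integrable_finset_sum _ fun k _ => intSqG i k)]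
    exact Finset.sum_congr rfl fun i _ => integral_finset_sum _ fun k _ => intSqG i k
  -- the u-part
  have key1 : (∫ x, ∑ i, 2 * U i x * ut i x)
      = -(2*μ*(∫ x, ∑ i, ∑ j, (pd j (U i) x)^2)) + 2 * ∑ i, ∑ k, c i k := by
    rw [integral_congr_ae (Filter.Eventually.of_forall fun x =>
      (Finset.sum_congr rfl fun i _ => point1 x i :
        (∑ i, 2*U i x*ut i x) = ∑ i, (2*μ*(∑ j, U i x * pd j (pd j (U i)) x)
          - (∑ j, U j x * (U i x * pd j (U i) x + pd j (U i) x * U i x))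
          - 2*(U i x * pd i P x)
          + 2*(∑ k, ∑ j, G j k x * (U i x * pd j (G i k) x)))))]
    have iAB : ∀ i : Fin 3, Integrable (fun x => 2*μ*(∑ j, U i x * pd j (pd j (U i)) x)
        - (∑ j, U j x * (U i x * pd j (U i) x + pd j (U i) x * U i x))) := fun i => by
      exact (iA i).sub (iB i)
    have iABC : ∀ i : Fin 3, Integrable (fun x => 2*μ*(∑ j, U i x * pd j (pd j (U i)) x)
        - (∑ j, U j x * (U i x * pd j (U i) x + pd j (U i) x * U i x))
        - 2*(U i x * pd i P x)) := fun i => by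
      exact (iAB i).sub (iC i)
    rw [integral_finset_sum _ (fun i _ => by exact (iABC i).add (iD i))]
    have step : ∀ i : Fin 3, (∫ x, (2*μ*(∑ j, U i x * pd j (pd j (U i)) x)
        - (∑ j, U j x * (U i x * pd j (U i) x + pd j (U i) x * U i x))
        - 2*(U i x * pd i P x)
        + 2*(∑ k, ∑ j, G j k x * (U i x * pd j (G i k) x))))
        = -(2*μ*(∑ j, ∫ x, (pd j (U i) x)^2)) - 2*(∫ x, U i x * pd i P x)
          + 2*∑ k, c i k := by
      intro i
      rw [integral_add (iABC i) (iD i),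
        integral_sub (iAB i) (iC i), integral_sub (iA i) (iB i),
        integral_const_mul, integral_const_mul, integral_const_mul,
        integral_finset_sum _ (fun j _ => cts_integrable (cU i) (hUs i)
          (pd_cont (pd_contDiff (hU i) j) j)),
        Finset.sum_congr rfl (fun j _ => hlap i j),
        div_free_cross hU hUs hdivu (hU i) (hU i),
        integral_finset_sum _ (f := fun k x => ∑ j, G j k x * (U i x * pd j (G i k) x)) (fun k _ => integrable_finset_sum _ fun j _ =>
          cts_integrable (cG j k) (hGs j k) ((cU i).mul (cpdG i k j))),
        Finset.sum_neg_distrib]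
      simp only [hc]
      ring
    rw [Finset.sum_congr rfl (fun i _ => step i), Finset.sum_add_distrib,
      Finset.sum_sub_distrib]
    have hP0 : ∑ i : Fin 3, 2*(∫ x, U i x * pd i P x) = 0 := by
      rw [← Finset.mul_sum,
        ← integral_finset_sum _ (fun i _ => cts_integrable (cU i) (hUs i) (pd_cont hP i)),
        div_free_transport hU hUs hdivu hP, mul_zero]
    rw [hP0, hsqU]
    simp only [Finset.mul_sum, Finset.sum_neg_distrib]
    ring
  -- the F-part
  have iE2 : ∀ i k, Integrable (fun x => -(2*ν*(G i k x)^2)) := fun i k =>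
    ((intSqG i k).const_mul _).neg
  have iB2 : ∀ i k, Integrable
      (fun x => ∑ j, U j x * (G i k x * pd j (G i k) x + pd j (G i k) x * G i k x)) :=
    fun i k => integrable_finset_sum _ fun j _ => cts_integrable (cU j) (hUs j)
      (((cG i k).mul (cpdG i k j)).add ((cpdG i k j).mul (cG i k)))
  have iD2 : ∀ i k, Integrable
      (fun x => 2*(∑ j, G j k x * (pd j (U i) x * G i k x))) := fun i k =>
    (integrable_finset_sum _ fun j _ =>
      cts_integrable (cG j k) (hGs j k) ((cpdU i j).mul (cG i k))).const_mul _
  have key2 : (∫ x, ∑ i, ∑ k, 2 * G i k x * Gt i k x)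
      = -(2*ν*(∫ x, ∑ i, ∑ k, (G i k x)^2)) - 2 * ∑ i, ∑ k, c i k := by
    rw [integral_congr_ae (Filter.Eventually.of_forall fun x =>
      (Finset.sum_congr rfl fun i _ => Finset.sum_congr rfl fun k _ => point2 x i k :
        (∑ i, ∑ k, 2*G i k x*Gt i k x) = ∑ i, ∑ k, (-(2*ν*(G i k x)^2)
          - (∑ j, U j x * (G i k x * pd j (G i k) x + pd j (G i k) x * G i k x))
          + 2*(∑ j, G j k x * (pd j (U i) x * G i k x)))))]
    have iEB : ∀ i k : Fin 3, Integrable (fun x => -(2*ν*(G i k x)^2)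
        - (∑ j, U j x * (G i k x * pd j (G i k) x + pd j (G i k) x * G i k x))) :=
      fun i k => by exact (iE2 i k).sub (iB2 i k)
    rw [integral_finset_sum _ (fun i _ => integrable_finset_sum _ fun k _ => by
      exact (iEB i k).add (iD2 i k)),
      Finset.sum_congr rfl (fun i _ => integral_finset_sum _ (fun k _ => by
        exact (iEB i k).add (iD2 i k)))]
    have step : ∀ i k : Fin 3, (∫ x, (-(2*ν*(G i k x)^2)
        - (∑ j, U j x * (G i k x * pd j (G i k) x + pd j (G i k) x * G i k x))
        + 2*(∑ j, G j k x * (pd j (U i) x * G i k x))))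
        = -(2*ν*(∫ x, (G i k x)^2)) - 2 * c i k := by
      intro i k
      rw [integral_add (iEB i k) (iD2 i k),
        integral_sub (iE2 i k) (iB2 i k),
        integral_neg, integral_const_mul, integral_const_mul,
        div_free_cross hU hUs hdivu (hG i k) (hG i k)]
      have : ∫ x, ∑ j, G j k x * (pd j (U i) x * G i k x) = d i k := by rw [hd]
      rw [this, hcd i k]
      ring
    rw [Finset.sum_congr rfl (fun i _ => Finset.sum_congr rfl fun k _ => step i k), hsqG]
    simp only [Finset.sum_sub_distrib, Finset.mul_sum, Finset.sum_neg_distrib]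
    try ring
  rw [key1, key2]
  ring

lemma space_contDiff (g : ℝ × (Fin 3 → ℝ) → ℝ)
    (hg : ContDiffOn ℝ (⊤ : ℕ∞) g (Set.Ici 0 ×ˢ Set.univ)) {t : ℝ} (ht : 0 < t) :
    ContDiff ℝ (⊤ : ℕ∞) (fun x : Fin 3 → ℝ => g (t, x)) := by
  rw [contDiff_iff_contDiffAt]
  intro x
  have hmem : Set.Ici (0:ℝ) ×ˢ (Set.univ : Set (Fin 3 → ℝ)) ∈ nhds (t, x) :=
    Filter.mem_of_superset ((isOpen_Ioi.prod isOpen_univ).mem_nhds ⟨ht, trivial⟩)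
      (Set.prod_mono Set.Ioi_subset_Ici_self le_rfl)
  exact ((hg (t, x) ⟨ht.le, trivial⟩).contDiffAt hmem).comp x
    ((contDiff_const.prodMk contDiff_id).contDiffAt)

lemma time_hasDerivAt (g : ℝ × (Fin 3 → ℝ) → ℝ)
    (hg : ContDiffOn ℝ (⊤ : ℕ∞) g (Set.Ici 0 ×ˢ Set.univ)) {t : ℝ} (ht : 0 < t) (x : Fin 3 → ℝ) :
    HasDerivAt (fun s => g (s, x)) (fderiv ℝ g (t, x) (1, 0)) t := by
  have hmem : Set.Ici (0:ℝ) ×ˢ (Set.univ : Set (Fin 3 → ℝ)) ∈ nhds (t, x) :=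
    Filter.mem_of_superset ((isOpen_Ioi.prod isOpen_univ).mem_nhds ⟨ht, trivial⟩)
      (Set.prod_mono Set.Ioi_subset_Ici_self le_rfl)
  have hd : DifferentiableAt ℝ g (t, x) :=
    (((hg (t, x) ⟨ht.le, trivial⟩).contDiffAt hmem)).differentiableAt (by simp)
  exact hd.hasFDerivAt.comp_hasDerivAt t ((hasDerivAt_id t).prodMk (hasDerivAt_const t x))

/-- Basic energy identity for the incompressible Oldroyd type model with a damping
term: for a smooth, compactly (spatially) supported solution `(u, F, p)` of
`∂_t u − μΔu + (u·∇)u + ∇p = ∑_k (F_{·k}·∇)F_{·k}`,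
`∂_t F_{·k} + ν F_{·k} + (u·∇)F_{·k} = (F_{·k}·∇)u`, `div u = 0`, `div Fᵀ = 0`,
one has `(1/2) d/dt (‖u‖²_{L²} + ‖F‖²_{L²}) + ν‖F‖²_{L²} + μ‖∇u‖²_{L²} = 0`. -/
theorem stmt6 (μ ν : ℝ) (hμ : 0 < μ) (hν : 0 ≤ ν)
    (u : ℝ → (Fin 3 → ℝ) → (Fin 3 → ℝ))
    (F : ℝ → (Fin 3 → ℝ) → Matrix (Fin 3) (Fin 3) ℝ)
    (p : ℝ → (Fin 3 → ℝ) → ℝ)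
    (hu_smooth : ∀ i, ContDiffOn ℝ (⊤ : ℕ∞) (fun q : ℝ × (Fin 3 → ℝ) => u q.1 q.2 i)
      (Set.Ici (0 : ℝ) ×ˢ Set.univ))
    (hF_smooth : ∀ i k, ContDiffOn ℝ (⊤ : ℕ∞) (fun q : ℝ × (Fin 3 → ℝ) => F q.1 q.2 i k)
      (Set.Ici (0 : ℝ) ×ˢ Set.univ))
    (hp_smooth : ContDiffOn ℝ (⊤ : ℕ∞) (fun q : ℝ × (Fin 3 → ℝ) => p q.1 q.2)
      (Set.Ici (0 : ℝ) ×ˢ Set.univ))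
    (hsupp : ∀ T : ℝ, 0 < T → ∃ K : Set (Fin 3 → ℝ), IsCompact K ∧
      ∀ t ∈ Set.Icc (0 : ℝ) T, ∀ x, x ∉ K → u t x = 0 ∧ F t x = 0 ∧ p t x = 0)
    (hmom : ∀ t : ℝ, 0 < t → ∀ x : Fin 3 → ℝ, ∀ i,
      deriv (fun s => u s x i) t
        - μ * ∑ j, fderiv ℝ
            (fun y => fderiv ℝ (fun z => u t z i) y (Pi.single j 1)) x (Pi.single j 1)
        + ∑ j, u t x j * fderiv ℝ (fun y => u t y i) x (Pi.single j 1)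
        + fderiv ℝ (fun y => p t y) x (Pi.single i 1)
        = ∑ k, ∑ j, F t x j k * fderiv ℝ (fun y => F t y i k) x (Pi.single j 1))
    (hdef : ∀ t : ℝ, 0 < t → ∀ x : Fin 3 → ℝ, ∀ i k,
      deriv (fun s => F s x i k) t + ν * F t x i k
        + ∑ j, u t x j * fderiv ℝ (fun y => F t y i k) x (Pi.single j 1)
        = ∑ j, F t x j k * fderiv ℝ (fun y => u t y i) x (Pi.single j 1))
    (hdivu : ∀ t : ℝ, 0 < t → ∀ x : Fin 3 → ℝ,
      ∑ i, fderiv ℝ (fun y => u t y i) x (Pi.single i 1) = 0)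
    (hdivF : ∀ t : ℝ, 0 < t → ∀ x : Fin 3 → ℝ, ∀ k,
      ∑ j, fderiv ℝ (fun y => F t y j k) x (Pi.single j 1) = 0) :
    ∀ t : ℝ, 0 < t → HasDerivAt
      (fun s => (1 / 2 : ℝ) * ((∫ x : Fin 3 → ℝ, ∑ i, (u s x i) ^ 2)
        + ∫ x : Fin 3 → ℝ, ∑ i, ∑ k, (F s x i k) ^ 2))
      (-(ν * ∫ x : Fin 3 → ℝ, ∑ i, ∑ k, (F t x i k) ^ 2)
        - μ * ∫ x : Fin 3 → ℝ,
            ∑ i, ∑ j, (fderiv ℝ (fun y => u t y i) x (Pi.single j 1)) ^ 2) t := by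
  intro t ht
  obtain ⟨K, hK, hKs⟩ := hsupp (2*t) (by linarith)
  -- derivative of the kinetic part
  have hA : HasDerivAt (fun s => ∫ x : Fin 3 → ℝ, ∑ i, (u s x i) ^ 2)
      (∫ x : Fin 3 → ℝ, ∑ i, 2 * u t x i *
        fderiv ℝ (fun q : ℝ × (Fin 3 → ℝ) => u q.1 q.2 i) (t, x) (1, 0)) t := by
    exact hasDerivAt_int t ht (fun i q => u q.1 q.2 i) hu_smooth hK
      (fun i s hs x hx => congrFun (hKs s hs x hx).1 i)
  have hB : HasDerivAt (fun s => ∫ x : Fin 3 → ℝ, ∑ i, ∑ k, (F s x i k) ^ 2)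
      (∫ x : Fin 3 → ℝ, ∑ i, ∑ k, 2 * F t x i k *
        fderiv ℝ (fun q : ℝ × (Fin 3 → ℝ) => F q.1 q.2 i k) (t, x) (1, 0)) t := by
    have hB0 : HasDerivAt
        (fun s => ∫ x : Fin 3 → ℝ, ∑ pk : Fin 3 × Fin 3, (F s x pk.1 pk.2) ^ 2)
        (∫ x : Fin 3 → ℝ, ∑ pk : Fin 3 × Fin 3, 2 * F t x pk.1 pk.2 *
          fderiv ℝ (fun q : ℝ × (Fin 3 → ℝ) => F q.1 q.2 pk.1 pk.2) (t, x) (1, 0)) t := by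
      exact hasDerivAt_int t ht (fun (pk : Fin 3 × Fin 3) (q : ℝ × (Fin 3 → ℝ)) => F q.1 q.2 pk.1 pk.2)
        (fun (pk : Fin 3 × Fin 3) => hF_smooth pk.1 pk.2) hK
        (fun (pk : Fin 3 × Fin 3) s hs x hx => congrFun (congrFun (hKs s hs x hx).2.1 pk.1) pk.2)
    have hfun : (fun s => ∫ x : Fin 3 → ℝ, ∑ i, ∑ k, (F s x i k) ^ 2)
        = (fun s => ∫ x : Fin 3 → ℝ, ∑ pk : Fin 3 × Fin 3, (F s x pk.1 pk.2) ^ 2) := by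
      funext s; congr 1; funext x; rw [Fintype.sum_prod_type]
    have hval : (∫ x : Fin 3 → ℝ, ∑ pk : Fin 3 × Fin 3, 2 * F t x pk.1 pk.2 *
          fderiv ℝ (fun q : ℝ × (Fin 3 → ℝ) => F q.1 q.2 pk.1 pk.2) (t, x) (1, 0))
        = ∫ x : Fin 3 → ℝ, ∑ i, ∑ k, 2 * F t x i k *
          fderiv ℝ (fun q : ℝ × (Fin 3 → ℝ) => F q.1 q.2 i k) (t, x) (1, 0) := by
      congr 1; funext x; rw [Fintype.sum_prod_type]
    rw [hfun, ← hval]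
    exact hB0
  -- time derivatives at (t, x)
  have hudiff : ∀ i (x : Fin 3 → ℝ), HasDerivAt (fun s => u s x i)
      (fderiv ℝ (fun q : ℝ × (Fin 3 → ℝ) => u q.1 q.2 i) (t, x) (1, 0)) t :=
    fun i x => time_hasDerivAt _ (hu_smooth i) ht x
  have hFdiff : ∀ i k (x : Fin 3 → ℝ), HasDerivAt (fun s => F s x i k)
      (fderiv ℝ (fun q : ℝ × (Fin 3 → ℝ) => F q.1 q.2 i k) (t, x) (1, 0)) t :=
    fun i k x => time_hasDerivAt _ (hF_smooth i k) ht x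
  -- apply the core energy computation
  have hE := energy_core μ ν (fun i x => u t x i) (fun i k x => F t x i k)
    (fun y => p t y)
    (fun i x => fderiv ℝ (fun q : ℝ × (Fin 3 → ℝ) => u q.1 q.2 i) (t, x) (1, 0))
    (fun i k x => fderiv ℝ (fun q : ℝ × (Fin 3 → ℝ) => F q.1 q.2 i k) (t, x) (1, 0))
    (fun i => space_contDiff _ (hu_smooth i) ht)
    (fun i => HasCompactSupport.intro hK (fun x hx => congrFun (hKs t ⟨ht.le, by linarith⟩ x hx).1 i))
    (fun i k => space_contDiff _ (hF_smooth i k) ht)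
    (fun i k => HasCompactSupport.intro hK (fun x hx => congrFun (congrFun (hKs t ⟨ht.le, by linarith⟩ x hx).2.1 i) k))
    (space_contDiff _ hp_smooth ht)
    (by
      intro x i
      show fderiv ℝ (fun q : ℝ × (Fin 3 → ℝ) => u q.1 q.2 i) (t, x) (1, 0)
        = μ * ∑ j, fderiv ℝ
            (fun y => fderiv ℝ (fun z => u t z i) y (Pi.single j 1)) x (Pi.single j 1)
          - ∑ j, u t x j * fderiv ℝ (fun y => u t y i) x (Pi.single j 1)
          - fderiv ℝ (fun y => p t y) x (Pi.single i 1)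
          + ∑ k, ∑ j, F t x j k * fderiv ℝ (fun y => F t y i k) x (Pi.single j 1)
      have h := hmom t ht x i
      rw [(hudiff i x).deriv] at h
      linarith)
    (by
      intro x i k
      show fderiv ℝ (fun q : ℝ × (Fin 3 → ℝ) => F q.1 q.2 i k) (t, x) (1, 0)
        = -(ν * F t x i k)
          - ∑ j, u t x j * fderiv ℝ (fun y => F t y i k) x (Pi.single j 1)
          + ∑ j, F t x j k * fderiv ℝ (fun y => u t y i) x (Pi.single j 1)
      have h := hdef t ht x i k
      rw [(hFdiff i k x).deriv] at h
      linarith)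
    (by
      intro x
      show ∑ i, fderiv ℝ (fun y => u t y i) x (Pi.single i 1) = 0
      exact hdivu t ht x)
    (by
      intro k x
      show ∑ j, fderiv ℝ (fun y => F t y j k) x (Pi.single j 1) = 0
      exact hdivF t ht x k)
  have hE' : (∫ x : Fin 3 → ℝ, ∑ i, 2 * u t x i *
        fderiv ℝ (fun q : ℝ × (Fin 3 → ℝ) => u q.1 q.2 i) (t, x) (1, 0))
      + (∫ x : Fin 3 → ℝ, ∑ i, ∑ k, 2 * F t x i k *
        fderiv ℝ (fun q : ℝ × (Fin 3 → ℝ) => F q.1 q.2 i k) (t, x) (1, 0))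
      = 2 * (-(ν * ∫ x : Fin 3 → ℝ, ∑ i, ∑ k, (F t x i k) ^ 2)
        - μ * ∫ x : Fin 3 → ℝ,
            ∑ i, ∑ j, (fderiv ℝ (fun y => u t y i) x (Pi.single j 1)) ^ 2) := by
    exact hE
  have h := (hA.add hB).const_mul (1/2 : ℝ)
  have hval : (1/2 : ℝ) * ((∫ x : Fin 3 → ℝ, ∑ i, 2 * u t x i *
        fderiv ℝ (fun q : ℝ × (Fin 3 → ℝ) => u q.1 q.2 i) (t, x) (1, 0))
      + (∫ x : Fin 3 → ℝ, ∑ i, ∑ k, 2 * F t x i k *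
        fderiv ℝ (fun q : ℝ × (Fin 3 → ℝ) => F q.1 q.2 i k) (t, x) (1, 0)))
      = -(ν * ∫ x : Fin 3 → ℝ, ∑ i, ∑ k, (F t x i k) ^ 2)
        - μ * ∫ x : Fin 3 → ℝ,
            ∑ i, ∑ j, (fderiv ℝ (fun y => u t y i) x (Pi.single j 1)) ^ 2 := by
    rw [hE']; ring
  rw [← hval]
  exact h
end

section
/- Let v : ℝ³ → ℝ³ be a Schwartz vector field (each component a Schwartz function) with ∑_j ∂_j v_j = 0 everywhere, and let f : ℝ³ → ℝ be a Schwartz function. Then for every ξ ∈ ℝ³, |𝓕(v·∇f)(ξ)| ≤ 2π |ξ| ‖v‖_{L²} ‖f‖_{L²}, where v·∇f = ∑_j v_j ∂_j f and ‖v‖²_{L²} = ∑_j ‖v_j‖²_{L²}. -/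
/-!
Because `v` is divergence free, `v·∇f = ∑ⱼ ∂ⱼ (vⱼ f)` is a divergence, so
`𝓕(v·∇f)(ξ) = 2πi ∑ⱼ ξⱼ 𝓕(vⱼ f)(ξ)`. Each `|𝓕(vⱼ f)(ξ)|` is at most `‖vⱼ f‖_{L¹}`, hence at most
`‖vⱼ‖_{L²} ‖f‖_{L²}` by Hölder, and Cauchy–Schwarz in `j` finishes the estimate.
-/

open MeasureTheory FourierTransform SchwartzMap LineDeriv Complex Real
open scoped RealInnerProductSpace

theorem SchwartzMap.lineDerivOp_postcompCLM {E F G : Type*} [NormedAddCommGroup E]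
    [NormedSpace ℝ E] [NormedAddCommGroup F] [NormedSpace ℝ F] [NormedAddCommGroup G]
    [NormedSpace ℝ G] (L : F →L[ℝ] G) (g : 𝓢(E, F)) (w : E) :
    ∂_{w} (g.postcompCLM L) = (∂_{w} g).postcompCLM L := by
  ext x
  have hcomp : ⇑(g.postcompCLM L) = L ∘ g := rfl
  rw [postcompCLM_apply, lineDerivOp_apply_eq_fderiv, lineDerivOp_apply_eq_fderiv, hcomp,
    fderiv_comp x L.differentiableAt g.differentiableAt, L.fderiv]
  rfl

theorem sum_fderiv_mul_apply_of_sum_fderiv_eq_zero {𝕜 E ι : Type*} [NontriviallyNormedField 𝕜]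
    [NormedAddCommGroup E] [NormedSpace 𝕜 E] [Fintype ι] {v : ι → E → 𝕜} {f : E → 𝕜}
    {e : ι → E} {x : E} (hv : ∀ j, DifferentiableAt 𝕜 (v j) x) (hf : DifferentiableAt 𝕜 f x)
    (hdiv : ∑ j, fderiv 𝕜 (v j) x (e j) = 0) :
    ∑ j, fderiv 𝕜 (fun y => v j y * f y) x (e j) = ∑ j, v j x * fderiv 𝕜 f x (e j) := by
  simp only [fderiv_fun_mul (hv _) hf, add_apply, smul_apply, smul_eq_mul,
    Finset.sum_add_distrib, ← Finset.mul_sum, hdiv, mul_zero, add_zero]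

theorem EuclideanSpace.norm_sum_smul_le {ι F : Type*} [Fintype ι] [NormedAddCommGroup F]
    [NormedSpace ℝ F] (ξ : EuclideanSpace ℝ ι) {z : ι → F} {a : ι → ℝ} (hz : ∀ j, ‖z j‖ ≤ a j) :
    ‖∑ j, ξ j • z j‖ ≤ ‖ξ‖ * √(∑ j, a j ^ 2) :=
  calc ‖∑ j, ξ j • z j‖ ≤ ∑ j, |ξ j| * a j := by
        refine (norm_sum_le _ _).trans (Finset.sum_le_sum fun j _ => ?_)
        rw [norm_smul, Real.norm_eq_abs]
        exact mul_le_mul_of_nonneg_left (hz j) (abs_nonneg _)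
    _ ≤ √(∑ j, |ξ j| ^ 2) * √(∑ j, a j ^ 2) := Real.sum_mul_le_sqrt_mul_sqrt _ _ _
    _ = ‖ξ‖ * √(∑ j, a j ^ 2) := by simp [EuclideanSpace.norm_eq]

section Fourier

variable {V : Type*} [NormedAddCommGroup V] [InnerProductSpace ℝ V] [FiniteDimensional ℝ V]
  [MeasurableSpace V] [BorelSpace V]

theorem SchwartzMap.fourier_sum_lineDerivOp_apply {ι E : Type*} [Fintype ι]
    [NormedAddCommGroup E] [NormedSpace ℂ E] (H : ι → 𝓢(V, E)) (e : ι → V) (ξ : V) :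
    𝓕 (∑ j, ∂_{e j} (H j)) ξ = (2 * π * I) • ∑ j, ⟪ξ, e j⟫ • 𝓕 (H j) ξ := by
  have hinner : ∀ j, (inner ℝ · (e j)).HasTemperateGrowth := fun j => by fun_prop
  simp [fourier_sum, fourier_lineDerivOp_eq, Finset.smul_sum, smulLeftCLM_apply_apply (hinner _)]

theorem SchwartzMap.norm_fourier_ofReal_mul_le (a b : 𝓢(V, ℝ)) (ξ : V) :
    ‖𝓕 ((pairing (ContinuousLinearMap.mul ℝ ℝ) a b).postcompCLM ofRealCLM) ξ‖
      ≤ (eLpNorm a 2 volume).toReal * (eLpNorm b 2 volume).toReal := by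
  refine (norm_fourier_apply_le_toLp_one _ ξ).trans ?_
  rw [norm_toLp, ← ENNReal.toReal_mul]
  refine ENNReal.toReal_mono (ENNReal.mul_ne_top (a.memLp 2 volume).eLpNorm_ne_top
    (b.memLp 2 volume).eLpNorm_ne_top) ?_
  calc eLpNorm ((pairing (ContinuousLinearMap.mul ℝ ℝ) a b).postcompCLM ofRealCLM) 1 volume
      = eLpNorm ((a : V → ℝ) • (b : V → ℝ)) 1 volume :=
        eLpNorm_congr_norm_ae (.of_forall fun x => by simp [pairing_apply_apply])
    _ ≤ _ := eLpNorm_smul_le_mul_eLpNorm b.continuous.aestronglyMeasurable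
        a.continuous.aestronglyMeasurable

end Fourier

/-- For a divergence-free Schwartz vector field `v` and a Schwartz function `f` on
`ℝ³`, the Fourier transform of `v·∇f` satisfies
`|𝓕(v·∇f)(ξ)| ≤ 2π |ξ| ‖v‖_{L²} ‖f‖_{L²}`. -/
theorem stmt10 (v : Fin 3 → SchwartzMap (EuclideanSpace ℝ (Fin 3)) ℝ)
    (f : SchwartzMap (EuclideanSpace ℝ (Fin 3)) ℝ)
    (hdiv : ∀ x : EuclideanSpace ℝ (Fin 3),
      ∑ j, fderiv ℝ (v j) x (EuclideanSpace.single j 1) = 0) :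
    ∀ ξ : EuclideanSpace ℝ (Fin 3),
      ‖𝓕 (fun x => ((∑ j, v j x * fderiv ℝ f x (EuclideanSpace.single j 1) : ℝ) : ℂ)) ξ‖
        ≤ 2 * Real.pi * ‖ξ‖
          * Real.sqrt (∑ j, ((eLpNorm (fun x => v j x) 2 volume).toReal) ^ 2)
          * (eLpNorm (fun x => f x) 2 volume).toReal := by
  intro ξ
  set H := fun j => (pairing (ContinuousLinearMap.mul ℝ ℝ) (v j) f).postcompCLM ofRealCLM
  have hdivForm : (fun x => ((∑ j, v j x * fderiv ℝ f x (EuclideanSpace.single j 1) : ℝ) : ℂ))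
      = ⇑(∑ j, (∂_{EuclideanSpace.single j (1 : ℝ)} (H j) : 𝓢(EuclideanSpace ℝ (Fin 3), ℂ))) := by
    ext x
    rw [← sum_fderiv_mul_apply_of_sum_fderiv_eq_zero (fun j => (v j).differentiableAt)
      f.differentiableAt (hdiv x)]
    simp [H, SchwartzMap.lineDerivOp_postcompCLM, lineDerivOp_apply_eq_fderiv, pairing_apply]
  rw [hdivForm, ← fourier_coe, fourier_sum_lineDerivOp_apply]
  simp only [EuclideanSpace.inner_single_right, one_mul, conj_trivial]
  have hsqrt : √(∑ j, ((eLpNorm (v j) 2 volume).toReal * (eLpNorm f 2 volume).toReal) ^ 2)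
      = √(∑ j, (eLpNorm (v j) 2 volume).toReal ^ 2) * (eLpNorm f 2 volume).toReal := by
    simp_rw [mul_pow, ← Finset.sum_mul]
    rw [Real.sqrt_mul (by positivity), Real.sqrt_sq ENNReal.toReal_nonneg]
  calc ‖(2 * (π : ℂ) * I) • ∑ j, ξ j • 𝓕 (H j) ξ‖ = 2 * π * ‖∑ j, ξ j • 𝓕 (H j) ξ‖ := by
        rw [norm_smul]; simp [abs_of_pos pi_pos]
    _ ≤ 2 * π * (‖ξ‖ * √(∑ j, ((eLpNorm (v j) 2 volume).toReal
          * (eLpNorm f 2 volume).toReal) ^ 2)) := by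
        gcongr
        exact EuclideanSpace.norm_sum_smul_le ξ fun j => norm_fourier_ofReal_mul_le (v j) f ξ
    _ = _ := by rw [hsqrt]; ring
end

section
/- Let u : ℝ³ → ℝ³ have Schwartz components, let F : ℝ³ → Matrix (Fin 3) (Fin 3) ℝ have Schwartz entries, and let p : ℝ³ → ℝ be a Schwartz function satisfying the Poisson equation Δp = −∑_{i,j} ∂_i ∂_j (u_i u_j) + ∑_{i,j,k} ∂_i ∂_j (F_{ik} F_{jk}) pointwise on ℝ³. Then for every ξ ∈ ℝ³ with ξ ≠ 0, the Euclidean norm of the vector 𝓕(∇p)(ξ) = (𝓕(∂_1 p)(ξ), 𝓕(∂_2 p)(ξ), 𝓕(∂_3 p)(ξ)) satisfies |𝓕(∇p)(ξ)| ≤ 2π |ξ| (‖u‖²_{L²} + ‖F‖²_{L²}), where ‖u‖²_{L²} = ∑_i ‖u_i‖²_{L²} and ‖F‖²_{L²} = ∑_{i,k} ‖F_{ik}‖²_{L²}. -/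
/-!
Under the Fourier transform `∂_v ∂_w` becomes multiplication by `-4π² ⟪ξ, v⟫ ⟪ξ, w⟫`, so the
Poisson equation `Δp = ∑ᵢⱼ ∂ᵢ∂ⱼ Tᵢⱼ` with `Tᵢⱼ = -uᵢuⱼ + ∑ₖ FᵢₖFⱼₖ` turns into
`|ξ|² p̂(ξ) = ∑ᵢⱼ ξᵢξⱼ T̂ᵢⱼ(ξ)`. Since `|(fg)^(ξ)| ≤ ‖fg‖_{L¹} ≤ ‖f‖₂ ‖g‖₂`, the quadratic form
`∑ᵢⱼ ξᵢξⱼ (uᵢuⱼ)^(ξ)` is bounded by `(∑ᵢ |ξᵢ| ‖uᵢ‖₂)² ≤ |ξ|² ‖u‖₂²` (Cauchy–Schwarz), and likewise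
for every column of `F`. Hence `|p̂(ξ)| ≤ ‖u‖₂² + ‖F‖₂²` for `ξ ≠ 0`, and the claim follows from
`(∂ᵢp)^(ξ) = 2πi ξᵢ p̂(ξ)`.
-/

open MeasureTheory FourierTransform SchwartzMap LineDeriv Laplacian Real

theorem integral_norm_mul_le_eLpNorm_two_mul {α : Type*} [MeasurableSpace α] {μ : Measure α}
    {f g : α → ℝ} (hf : MemLp f 2 μ) (hg : MemLp g 2 μ) :
    ∫ x, ‖f x * g x‖ ∂μ ≤ (eLpNorm f 2 μ).toReal * (eLpNorm g 2 μ).toReal := by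
  have hfg : AEStronglyMeasurable (f • g) μ := hf.1.smul hg.1
  calc ∫ x, ‖f x * g x‖ ∂μ = (eLpNorm (f • g) 1 μ).toReal :=
        (lpNorm_one_eq_integral_norm hfg).symm.trans (toReal_eLpNorm hfg).symm
    _ ≤ (eLpNorm f 2 μ * eLpNorm g 2 μ).toReal :=
        ENNReal.toReal_mono (ENNReal.mul_ne_top hf.eLpNorm_ne_top hg.eLpNorm_ne_top)
          (eLpNorm_smul_le_mul_eLpNorm hg.1 hf.1)
    _ = _ := ENNReal.toReal_mul

theorem OrthonormalBasis.norm_sum_sum_inner_mul_inner_mul_le {ι 𝕜 V : Type*} [Fintype ι]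
    [RCLike 𝕜] [NormedAddCommGroup V] [InnerProductSpace ℝ V] (b : OrthonormalBasis ι ℝ V)
    (ξ : V) {a : ι → ℝ} {c : ι → ι → 𝕜} (hc : ∀ i j, ‖c i j‖ ≤ a i * a j) :
    ‖∑ i, ∑ j, ((inner ℝ ξ (b i) * inner ℝ ξ (b j) : ℝ) : 𝕜) * c i j‖
      ≤ ‖ξ‖ ^ 2 * ∑ i, a i ^ 2 := by
  set x : ι → ℝ := fun i ↦ inner ℝ ξ (b i)
  have hx : ∑ i, x i ^ 2 = ‖ξ‖ ^ 2 := b.sum_sq_inner_left ξ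
  calc _ ≤ ∑ i, ∑ j, (|x i| * a i) * (|x j| * a j) := by
        refine (norm_sum_le _ _).trans <| Finset.sum_le_sum fun i _ ↦
          (norm_sum_le _ _).trans <| Finset.sum_le_sum fun j _ ↦ ?_
        rw [norm_mul, RCLike.norm_ofReal, abs_mul]
        calc |x i| * |x j| * ‖c i j‖ ≤ |x i| * |x j| * (a i * a j) := by gcongr; exact hc i j
          _ = _ := by ring
    _ = (∑ i, |x i| * a i) ^ 2 := by rw [sq, Finset.sum_mul_sum]
    _ ≤ (∑ i, |x i| ^ 2) * ∑ i, a i ^ 2 := Finset.sum_mul_sq_le_sq_mul_sq _ _ _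
    _ = ‖ξ‖ ^ 2 * ∑ i, a i ^ 2 := by simp only [sq_abs, hx]

namespace SchwartzMap

theorem lineDerivOp_postcompCLM_s11 {V E F : Type*} [NormedAddCommGroup V] [NormedSpace ℝ V]
    [NormedAddCommGroup E] [NormedSpace ℝ E] [NormedAddCommGroup F] [NormedSpace ℝ F]
    (L : E →L[ℝ] F) (m : V) (f : 𝓢(V, E)) :
    ∂_{m} (postcompCLM L f) = postcompCLM L (∂_{m} f) := by
  ext x
  simp only [lineDerivOp_apply_eq_fderiv, postcompCLM_apply]
  rw [show ⇑(postcompCLM L f) = L ∘ f from rfl,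
    fderiv_comp x L.differentiableAt f.differentiableAt, L.fderiv]
  rfl

theorem lineDerivOp_lineDerivOp_apply {V E : Type*} [NormedAddCommGroup V] [NormedSpace ℝ V]
    [NormedAddCommGroup E] [NormedSpace ℝ E] (v w : V) (f : 𝓢(V, E)) (x : V) :
    ∂_{v} (∂_{w} f) x = fderiv ℝ (fun y ↦ fderiv ℝ f y w) x v :=
  lineDerivOp_apply_eq_fderiv v _ x

noncomputable def stress {V ι κ : Type*} [NormedAddCommGroup V] [NormedSpace ℝ V] [Fintype κ]
    (u : ι → 𝓢(V, ℝ)) (F : ι → κ → 𝓢(V, ℝ)) (i j : ι) : 𝓢(V, ℝ) :=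
  -pairing (ContinuousLinearMap.mul ℝ ℝ) (u i) (u j)
    + ∑ k, pairing (ContinuousLinearMap.mul ℝ ℝ) (F i k) (F j k)

variable {V : Type*} [NormedAddCommGroup V] [InnerProductSpace ℝ V] [FiniteDimensional ℝ V]
  [MeasurableSpace V] [BorelSpace V]

/-- `fourierAt ξ g = 𝓕 (fun x ↦ (g x : ℂ)) ξ` (definitionally), packaged as a continuous linear
functional on real Schwartz functions so that it can be pushed through the Poisson equation. -/
noncomputable def fourierAt (ξ : V) : 𝓢(V, ℝ) →L[ℝ] ℂ :=
  BoundedContinuousFunction.evalCLM ℝ ξ ∘L toBoundedContinuousFunctionCLM ℝ V ℂ ∘L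
    fourierTransformCLM ℝ ∘L postcompCLM Complex.ofRealCLM

theorem norm_fourierAt_le_integral_norm (ξ : V) (g : 𝓢(V, ℝ)) :
    ‖fourierAt ξ g‖ ≤ ∫ x, ‖g x‖ :=
  (VectorFourier.norm_fourierIntegral_le_integral_norm _ volume (innerₗ V)
    (fun x ↦ (g x : ℂ)) ξ).trans_eq (by simp)

theorem norm_fourierAt_mul_le (ξ : V) (f g : 𝓢(V, ℝ)) :
    ‖fourierAt ξ (pairing (ContinuousLinearMap.mul ℝ ℝ) f g)‖
      ≤ (eLpNorm f 2 volume).toReal * (eLpNorm g 2 volume).toReal :=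
  (norm_fourierAt_le_integral_norm ξ _).trans
    (integral_norm_mul_le_eLpNorm_two_mul (f.memLp 2) (g.memLp 2))

theorem fourierAt_lineDerivOp (ξ m : V) (g : 𝓢(V, ℝ)) :
    fourierAt ξ (∂_{m} g) = 2 * π * Complex.I * inner ℝ ξ m * fourierAt ξ g := by
  have hm : (inner ℝ · m).HasTemperateGrowth := by fun_prop
  change 𝓕 (postcompCLM Complex.ofRealCLM (∂_{m} g)) ξ
    = 2 * π * Complex.I * inner ℝ ξ m * 𝓕 (postcompCLM Complex.ofRealCLM g) ξ
  rw [← lineDerivOp_postcompCLM_s11, fourier_lineDerivOp_eq, _root_.smul_apply,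
    smulLeftCLM_apply_apply hm, smul_eq_mul, Complex.real_smul]
  ring

theorem fourierAt_lineDerivOp_lineDerivOp (ξ v w : V) (g : 𝓢(V, ℝ)) :
    fourierAt ξ (∂_{v} (∂_{w} g))
      = -(4 * π ^ 2) * (inner ℝ ξ v * inner ℝ ξ w : ℝ) * fourierAt ξ g := by
  rw [fourierAt_lineDerivOp, fourierAt_lineDerivOp]
  push_cast
  linear_combination (4 * π ^ 2 * inner ℝ ξ v * inner ℝ ξ w * fourierAt ξ g : ℂ) * Complex.I_sq

theorem fourierAt_laplacian (ξ : V) (g : 𝓢(V, ℝ)) :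
    fourierAt ξ (Δ g) = -(4 * π ^ 2) * (‖ξ‖ ^ 2 : ℝ) * fourierAt ξ g := by
  let b := stdOrthonormalBasis ℝ V
  rw [laplacian_eq_sum b, map_sum]
  simp only [fourierAt_lineDerivOp_lineDerivOp, ← Finset.sum_mul, ← Finset.mul_sum,
    ← Complex.ofReal_sum, ← sq, b.sum_sq_inner_left]

variable {ι : Type*} [Fintype ι] (b : OrthonormalBasis ι ℝ V)

theorem sq_norm_mul_fourierAt_eq_of_laplacian_eq {p : 𝓢(V, ℝ)} {T : ι → ι → 𝓢(V, ℝ)}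
    (hp : Δ p = ∑ i, ∑ j, ∂_{b i} (∂_{b j} (T i j))) (ξ : V) :
    (‖ξ‖ ^ 2 : ℝ) * fourierAt ξ p
      = ∑ i, ∑ j, (inner ℝ ξ (b i) * inner ℝ ξ (b j) : ℝ) * fourierAt ξ (T i j) := by
  have h := congrArg (fourierAt ξ) hp
  simp only [fourierAt_laplacian, map_sum, fourierAt_lineDerivOp_lineDerivOp, mul_assoc,
    ← Finset.mul_sum] at h
  refine mul_left_cancel₀ ?_ h
  have : (π : ℂ) ≠ 0 := Complex.ofReal_ne_zero.mpr pi_ne_zero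
  simp [this]

theorem norm_sum_sum_fourierAt_stress_le {κ : Type*} [Fintype κ] (ξ : V) (u : ι → 𝓢(V, ℝ))
    (F : ι → κ → 𝓢(V, ℝ)) :
    ‖∑ i, ∑ j, (inner ℝ ξ (b i) * inner ℝ ξ (b j) : ℝ) * fourierAt ξ (stress u F i j)‖
      ≤ ‖ξ‖ ^ 2 * (∑ i, (eLpNorm (u i) 2 volume).toReal ^ 2
        + ∑ i, ∑ k, (eLpNorm (F i k) 2 volume).toReal ^ 2) := by
  set w : ι → ι → ℂ := fun i j ↦ ((inner ℝ ξ (b i) * inner ℝ ξ (b j) : ℝ) : ℂ)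
  set A : ι → ι → ℂ := fun i j ↦ fourierAt ξ (pairing (ContinuousLinearMap.mul ℝ ℝ) (u i) (u j))
  set B : κ → ι → ι → ℂ := fun k i j ↦
    fourierAt ξ (pairing (ContinuousLinearMap.mul ℝ ℝ) (F i k) (F j k))
  have hsplit : ∑ i, ∑ j, w i j * fourierAt ξ (stress u F i j)
      = -∑ i, ∑ j, w i j * A i j + ∑ k, ∑ i, ∑ j, w i j * B k i j := by
    simp only [stress, map_add, map_neg, map_sum, mul_add, mul_neg, Finset.mul_sum,
      Finset.sum_add_distrib, Finset.sum_neg_distrib]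
    congr 1
    exact (Finset.sum_congr rfl fun i _ ↦ Finset.sum_comm).trans Finset.sum_comm
  rw [hsplit]
  calc _ ≤ ‖∑ i, ∑ j, w i j * A i j‖ + ∑ k, ‖∑ i, ∑ j, w i j * B k i j‖ :=
        (norm_add_le _ _).trans (by rw [norm_neg]; gcongr; exact norm_sum_le _ _)
    _ ≤ ‖ξ‖ ^ 2 * ∑ i, (eLpNorm (u i) 2 volume).toReal ^ 2
        + ∑ k, ‖ξ‖ ^ 2 * ∑ i, (eLpNorm (F i k) 2 volume).toReal ^ 2 := by
      gcongr with k <;>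
        exact b.norm_sum_sum_inner_mul_inner_mul_le ξ fun i j ↦ norm_fourierAt_mul_le ξ _ _
    _ = _ := by rw [← Finset.mul_sum, Finset.sum_comm, mul_add]

theorem norm_fourierAt_le_of_laplacian_eq_stress {κ : Type*} [Fintype κ] {p : 𝓢(V, ℝ)}
    {u : ι → 𝓢(V, ℝ)} {F : ι → κ → 𝓢(V, ℝ)}
    (hp : Δ p = ∑ i, ∑ j, ∂_{b i} (∂_{b j} (stress u F i j))) {ξ : V} (hξ : ξ ≠ 0) :
    ‖fourierAt ξ p‖ ≤ ∑ i, (eLpNorm (u i) 2 volume).toReal ^ 2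
      + ∑ i, ∑ k, (eLpNorm (F i k) 2 volume).toReal ^ 2 := by
  refine le_of_mul_le_mul_left ?_ (pow_pos (norm_pos_iff.mpr hξ) 2)
  calc ‖ξ‖ ^ 2 * ‖fourierAt ξ p‖ = ‖((‖ξ‖ ^ 2 : ℝ) : ℂ) * fourierAt ξ p‖ := by
        rw [norm_mul, Complex.norm_real, norm_pow, norm_norm]
    _ ≤ _ := by
      rw [sq_norm_mul_fourierAt_eq_of_laplacian_eq b hp]
      exact norm_sum_sum_fourierAt_stress_le b ξ u F

theorem sqrt_sum_norm_fourierAt_lineDerivOp_sq (ξ : V) (p : 𝓢(V, ℝ)) :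
    √(∑ i, ‖fourierAt ξ (∂_{b i} p)‖ ^ 2) = 2 * π * ‖ξ‖ * ‖fourierAt ξ p‖ := by
  have hcoord : ∀ i, ‖fourierAt ξ (∂_{b i} p)‖ ^ 2
      = (2 * π * ‖fourierAt ξ p‖) ^ 2 * inner ℝ ξ (b i) ^ 2 := fun i ↦ by
    simp only [fourierAt_lineDerivOp, norm_mul, Complex.norm_I, Complex.norm_real,
      Complex.norm_ofNat, Real.norm_eq_abs, abs_of_nonneg pi_nonneg, mul_one]
    rw [← sq_abs (inner ℝ ξ (b i))]
    ring
  rw [Finset.sum_congr rfl fun i _ ↦ hcoord i, ← Finset.mul_sum, b.sum_sq_inner_left, ← mul_pow,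
    Real.sqrt_sq (by positivity)]
  ring

end SchwartzMap

/-- If Schwartz functions `u`, `F`, `p` on `ℝ³` satisfy the Poisson equation
`Δp = −∑_{i,j} ∂_i∂_j(u_i u_j) + ∑_{i,j,k} ∂_i∂_j(F_{ik} F_{jk})`, then for every
`ξ ≠ 0`, `|𝓕(∇p)(ξ)| ≤ 2π |ξ| (‖u‖²_{L²} + ‖F‖²_{L²})`. -/
theorem stmt11 (u : Fin 3 → SchwartzMap (EuclideanSpace ℝ (Fin 3)) ℝ)
    (F : Fin 3 → Fin 3 → SchwartzMap (EuclideanSpace ℝ (Fin 3)) ℝ)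
    (p : SchwartzMap (EuclideanSpace ℝ (Fin 3)) ℝ)
    (hPoisson : ∀ x : EuclideanSpace ℝ (Fin 3),
      ∑ i, fderiv ℝ (fun y => fderiv ℝ p y (EuclideanSpace.single i 1)) x
          (EuclideanSpace.single i 1)
        = -(∑ i, ∑ j, fderiv ℝ
              (fun y => fderiv ℝ (fun z => u i z * u j z) y (EuclideanSpace.single j 1))
              x (EuclideanSpace.single i 1))
          + ∑ i, ∑ j, ∑ k, fderiv ℝ
              (fun y => fderiv ℝ (fun z => F i k z * F j k z) y (EuclideanSpace.single j 1))
              x (EuclideanSpace.single i 1)) :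
    ∀ ξ : EuclideanSpace ℝ (Fin 3), ξ ≠ 0 →
      Real.sqrt (∑ i,
          ‖𝓕 (fun x => ((fderiv ℝ p x (EuclideanSpace.single i 1) : ℝ) : ℂ)) ξ‖ ^ 2)
        ≤ 2 * Real.pi * ‖ξ‖
          * ((∑ i, ((eLpNorm (fun x => u i x) 2 volume).toReal) ^ 2)
            + ∑ i, ∑ k, ((eLpNorm (fun x => F i k x) 2 volume).toReal) ^ 2) := by
  intro ξ hξ
  let b := EuclideanSpace.basisFun (Fin 3) ℝ
  have hp : Δ p = ∑ i, ∑ j, ∂_{b i} (∂_{b j} (stress u F i j)) := by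
    simp only [stress, lineDerivOp_add, lineDerivOp_neg, lineDerivOp_sum, Finset.sum_add_distrib,
      Finset.sum_neg_distrib]
    ext x
    simpa [laplacian_eq_sum b, lineDerivOp_lineDerivOp_apply, pairing_apply, b] using hPoisson x
  have hgrad := sqrt_sum_norm_fourierAt_lineDerivOp_sq b ξ p
  simp only [b, EuclideanSpace.basisFun_apply] at hgrad
  calc _ = 2 * π * ‖ξ‖ * ‖fourierAt ξ p‖ := hgrad
    _ ≤ _ := by gcongr; exact norm_fourierAt_le_of_laplacian_eq_stress b hp hξ
end
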